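/- (A fat half-level set) Let d ≥ 1, let E := {x ∈ ℝ^d : ⌊x_d⌋ is even} and K := 2^{−d} χ_{[−1,1]^d}. Then (K ∗ χ_E)(x) = 1/2 for every x ∈ ℝ^d; in particular T_K E = ∅ and T_K(Eᶜ) = ∅, so the level set {x : (K ∗ χ_E)(x) = 1/2} is all of ℝ^d. -/

import Mathlib

/-!
For the cube `Q(x) = x + [-1, 1]^d` we have `(K ∗ χ_F)(x) = 2^{-d} |Q(x) ∩ F|`, and for a slab
set `F = {y | y_i ∈ S}` this is `2^{-d} · 2^{d-1} · |[x_i - 1, x_i + 1] ∩ S|`. If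
`t + 1 ∈ S ↔ t ∉ S`, as for `S = {t | ⌊t⌋ even}` and for its complement, then `χ_S` is
2-periodic, so `m = |[a, a + 2] ∩ S|` does not depend on `a`; translating by 1 exchanges `S` and
`Sᶜ`, hence `m + m = 2` and `m = 1`.
-/

open MeasureTheory

/-- The convolution of a kernel `K` with the indicator function of a set `E`. -/
noncomputable def conv {d : ℕ} (K : EuclideanSpace ℝ (Fin d) → ℝ)
    (E : Set (EuclideanSpace ℝ (Fin d))) (x : EuclideanSpace ℝ (Fin d)) : ℝ :=
  ∫ y, K (x - y) * E.indicator (fun _ => (1 : ℝ)) y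

/-- The thresholding operator `T_K E = {x | (K ∗ χ_E)(x) > 1/2}`. -/
def thresh {d : ℕ} (K : EuclideanSpace ℝ (Fin d) → ℝ)
    (E : Set (EuclideanSpace ℝ (Fin d))) : Set (EuclideanSpace ℝ (Fin d)) :=
  {x | 1 / 2 < conv K E x}

open Set

theorem volume_Icc_inter_eq_of_add_mem_iff_notMem {S : Set ℝ} (hS : MeasurableSet S) {c : ℝ}
    (hc : 0 ≤ c) (hSc : ∀ t, t + c ∈ S ↔ t ∉ S) (a : ℝ) :
    volume (Icc a (a + 2 * c) ∩ S) = ENNReal.ofReal c := by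
  set f := S.indicator (1 : ℝ → ℝ)
  have hshift : ∀ t, f (t + c) = 1 - f t := by
    intro t
    by_cases ht : t ∈ S <;> simp [f, ht, hSc]
  have hper : Function.Periodic f (2 * c) := fun t => by
    rw [two_mul, ← add_assoc, hshift, hshift, sub_sub_cancel]
  have hint : IntervalIntegrable f volume a (a + 2 * c) :=
    (intervalIntegrable_const (c := (1 : ℝ))).mono_fun
      (measurable_const.indicator hS).aestronglyMeasurable
      (.of_forall fun t => by by_cases ht : t ∈ S <;> simp [f, ht])
  have hmean : ∫ t in a..a + 2 * c, f t = c := by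
    have h := hper.intervalIntegral_add_eq (a + c) a
    rw [add_right_comm, ← intervalIntegral.integral_comp_add_right] at h
    simp only [hshift] at h
    rw [intervalIntegral.integral_sub intervalIntegrable_const hint] at h
    simp only [intervalIntegral.integral_const, add_sub_cancel_left, smul_eq_mul, mul_one] at h
    linarith
  have hvol : volume (Icc a (a + 2 * c) ∩ S) = ENNReal.ofReal (∫ t in a..a + 2 * c, f t) := by
    rw [intervalIntegral.integral_of_le (by linarith), integral_indicator_one hS,
      measureReal_restrict_apply hS, inter_comm S,
      ofReal_measureReal ((measure_mono inter_subset_left).trans_lt measure_Ioc_lt_top).ne]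
    exact measure_congr (Ioc_ae_eq_Icc.symm.inter (ae_eq_refl _))
  rw [hvol, hmean]

theorem measurableSet_even_floor : MeasurableSet {t : ℝ | Even ⌊t⌋} :=
  Int.measurable_floor (MeasurableSet.of_discrete (s := {n : ℤ | Even n}))

theorem even_floor_add_one_iff (t : ℝ) : Even ⌊t + 1⌋ ↔ ¬Even ⌊t⌋ := by
  rw [Int.floor_add_one, Int.even_add_one]

theorem EuclideanSpace.volume_ofLp_preimage_univ_pi {ι : Type*} [Fintype ι] (I : ι → Set ℝ) :
    volume (WithLp.ofLp ⁻¹' univ.pi I : Set (EuclideanSpace ℝ ι)) = ∏ i, volume (I i) :=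
  ((EuclideanSpace.volume_preserving_symm_measurableEquiv_toLp ι).measure_preimage_equiv _).trans
    (volume_pi_pi I)

section Cube

variable {ι : Type*}

def cubeAround (x : EuclideanSpace ℝ ι) : Set (EuclideanSpace ℝ ι) :=
  WithLp.ofLp ⁻¹' univ.pi fun i => Icc (x i - 1) (x i + 1)

theorem measurableSet_cubeAround [Fintype ι] (x : EuclideanSpace ℝ ι) :
    MeasurableSet (cubeAround x) :=
  (WithLp.measurable_ofLp 2 _) (.univ_pi fun _ => measurableSet_Icc)

theorem volume_cubeAround_inter_coord_preimage [Fintype ι] (x : EuclideanSpace ℝ ι) (i : ι)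
    (S : Set ℝ) :
    volume (cubeAround x ∩ {y | y i ∈ S}) =
      volume (Icc (x i - 1) (x i + 1) ∩ S) * 2 ^ (Fintype.card ι - 1) := by
  classical
  have hpi : cubeAround x ∩ {y | y i ∈ S} = WithLp.ofLp ⁻¹' univ.pi
      (Function.update (fun j => Icc (x j - 1) (x j + 1)) i (Icc (x i - 1) (x i + 1) ∩ S)) := by
    ext y
    simp only [cubeAround, mem_inter_iff, mem_preimage, mem_univ_pi, mem_ofPred_eq]
    grind
  rw [hpi, EuclideanSpace.volume_ofLp_preimage_univ_pi, Fintype.prod_eq_mul_prod_compl i,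
    Function.update_self]
  congr 1
  calc _ = ∏ _j ∈ ({i}ᶜ : Finset ι), (2 : ENNReal) := Finset.prod_congr rfl fun j hj => by
        rw [Function.update_of_ne (Finset.notMem_singleton.1 (Finset.mem_compl.1 hj)),
          Real.volume_Icc]
        norm_num
    _ = 2 ^ (Fintype.card ι - 1) := by simp [Finset.card_compl]

end Cube

theorem conv_cube_kernel {d : ℕ} {F : Set (EuclideanSpace ℝ (Fin d))} (hF : MeasurableSet F)
    (c : ℝ) (x : EuclideanSpace ℝ (Fin d)) :
    conv (fun z => if ∀ i, |z i| ≤ 1 then c else 0) F x = volume.real (cubeAround x ∩ F) * c := by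
  have hK : ∀ y,
      (if ∀ i, |(x - y) i| ≤ 1 then c else 0) = (cubeAround x).indicator (fun _ => c) y :=
    fun y => by
      classical
      rw [indicator_apply]
      exact if_congr (by simp only [PiLp.sub_apply, mem_Icc_iff_abs_le, cubeAround, mem_preimage,
        mem_univ_pi]) rfl rfl
  rw [conv, ← smul_eq_mul, ← integral_indicator_const c ((measurableSet_cubeAround x).inter hF)]
  congr with y
  rw [hK, ← inter_indicator_mul, mul_one]

theorem conv_cube_kernel_coord_preimage_eq_half {d : ℕ} (i : Fin d) {S : Set ℝ}
    (hS : MeasurableSet S) (hSc : ∀ t, t + 1 ∈ S ↔ t ∉ S) (x : EuclideanSpace ℝ (Fin d)) :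
    conv (fun z => if ∀ i, |z i| ≤ 1 then (2 : ℝ) ^ (-(d : ℤ)) else 0) {y | y i ∈ S} x = 1 / 2 := by
  have hslab : volume (Icc (x i - 1) (x i + 1) ∩ S) = 1 := by
    convert volume_Icc_inter_eq_of_add_mem_iff_notMem hS zero_le_one hSc (x i - 1) using 4
    · ring
    · simp
  obtain ⟨n, rfl⟩ : ∃ n, d = n + 1 := Nat.exists_eq_add_one.2 i.pos
  rw [conv_cube_kernel (F := {y | y i ∈ S}) (hS.preimage (by fun_prop)), measureReal_def,
    volume_cubeAround_inter_coord_preimage, hslab, Fintype.card_fin, one_mul, ENNReal.toReal_pow,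
    ENNReal.toReal_ofNat, ← zpow_natCast, ← zpow_add₀ two_ne_zero]
  norm_num

/-- A fat half-level set: with `E = {x ∈ ℝ^d : ⌊x_d⌋ even}` and `K = 2^{−d} χ_{[−1,1]^d}`,
    the convolution `K ∗ χ_E` is identically `1/2`; in particular, `T_K E = ∅`,
    `T_K(Eᶜ) = ∅`, and the `1/2`-level set is all of `ℝ^d`. -/
theorem fat_half_level_set (d : ℕ) (hd : 1 ≤ d) :
    ∀ (E : Set (EuclideanSpace ℝ (Fin d))) (K : EuclideanSpace ℝ (Fin d) → ℝ),
      E = {x | Even ⌊x ⟨d - 1, by omega⟩⌋} →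
      (K = fun x => if ∀ i, |x i| ≤ 1 then (2 : ℝ) ^ (-(d : ℤ)) else 0) →
      (∀ x, conv K E x = 1 / 2) ∧
      thresh K E = ∅ ∧ thresh K Eᶜ = ∅ ∧
      {x | conv K E x = 1 / 2} = Set.univ := by
  intro E K hE hK
  have hconv : ∀ x, conv K E x = 1 / 2 := by
    subst hE hK
    exact conv_cube_kernel_coord_preimage_eq_half _ measurableSet_even_floor even_floor_add_one_iff
  have hconv_compl : ∀ x, conv K Eᶜ x = 1 / 2 := by
    subst hE hK
    exact conv_cube_kernel_coord_preimage_eq_half _ measurableSet_even_floor.compl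
      fun t => (even_floor_add_one_iff t).not
  refine ⟨hconv, ?_, ?_, ?_⟩ <;> ext x
  · simp [thresh, hconv x]
  · simp [thresh, hconv_compl x]
  · simp [hconv x]
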